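/- Let ŵ ∈ ℝ^d be a global minimizer of the loss L. Then (P_k ŵ − ŵ)ᵀ ∇L(P_k ŵ) = (1/N₁) · ŵᵀ (I_d − P_k) ∑_{i∈S} ( x_i − m_i(P_k ŵ) ), where I_d is the d×d identity matrix. (Intermediate identity in the proof of Theorem 2, using (I_d − P_k)P_k = 0 and ∇L(ŵ) = 0.) -/

import Mathlib

/-!
At `u = P_k ŵ` the loss has gradient `-(1/N₁) A - (λ₂/N₁) P_k A + λ₃ u`, where
`A = ∑_{i∈S} (x_i - m_i(u))` is the gradient of the Cox partial log-likelihood at `u` (the chain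
rule through `P_k` contributes `P_kᵀ = P_k`, and `P_k u = u`). Since `P_k` is an orthogonal
projection, `P_k ŵ - ŵ` lies in its kernel, hence is orthogonal to `P_k A` and to `u`, which kills
the last two terms; self-adjointness turns `⟨P_k ŵ - ŵ, A⟩` into `⟨ŵ, P_k A - A⟩`.
-/

open scoped RealInnerProductSpace

open Real InnerProductSpace

section GradientCalculus

variable {F : Type*} [NormedAddCommGroup F] [InnerProductSpace ℝ F] [CompleteSpace F]
  {f g : F → ℝ} {f' g' x : F}

theorem HasGradientAt.add (hf : HasGradientAt f f' x) (hg : HasGradientAt g g' x) :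
    HasGradientAt (fun y => f y + g y) (f' + g') x := by
  rw [hasGradientAt_iff_hasFDerivAt, map_add]
  exact HasFDerivAt.add hf hg

theorem HasGradientAt.sub (hf : HasGradientAt f f' x) (hg : HasGradientAt g g' x) :
    HasGradientAt (fun y => f y - g y) (f' - g') x := by
  rw [hasGradientAt_iff_hasFDerivAt, map_sub]
  exact HasFDerivAt.sub hf hg

theorem HasGradientAt.const_mul (c : ℝ) (hf : HasGradientAt f f' x) :
    HasGradientAt (fun y => c * f y) (c • f') x := by
  rw [hasGradientAt_iff_hasFDerivAt, map_smulₛₗ, conj_trivial]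
  exact HasFDerivAt.const_mul hf c

theorem HasGradientAt.fun_sum {ι : Type*} {s : Finset ι} {f : ι → F → ℝ} {f' : ι → F}
    (h : ∀ i ∈ s, HasGradientAt (f i) (f' i) x) :
    HasGradientAt (fun y => ∑ i ∈ s, f i y) (∑ i ∈ s, f' i) x := by
  rw [hasGradientAt_iff_hasFDerivAt, map_sum]
  exact HasFDerivAt.fun_sum h

theorem HasDerivAt.comp_hasGradientAt (x : F) {h : ℝ → ℝ} {h' : ℝ}
    (hh : HasDerivAt h h' (f x)) (hf : HasGradientAt f f' x) :
    HasGradientAt (h ∘ f) (h' • f') x := by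
  rw [hasGradientAt_iff_hasFDerivAt, map_smulₛₗ, conj_trivial]
  exact hh.comp_hasFDerivAt x hf

theorem HasGradientAt.comp_continuousLinearMap (T : F →L[ℝ] F)
    (hf : HasGradientAt f f' (T x)) : HasGradientAt (f ∘ T) (T.adjoint f') x := by
  have hdual : toDual ℝ F (T.adjoint f') = (toDual ℝ F f').comp T := by
    ext v
    simp [toDual_apply_apply, ContinuousLinearMap.adjoint_inner_left]
  rw [hasGradientAt_iff_hasFDerivAt, hdual]
  exact HasFDerivAt.comp x (hasGradientAt_iff_hasFDerivAt.mp hf) T.hasFDerivAt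

theorem hasGradientAt_inner_right (a x : F) : HasGradientAt (fun y => ⟪a, y⟫) a x :=
  (innerSL ℝ a).hasFDerivAt

theorem hasGradientAt_norm_sq (x : F) :
    HasGradientAt (fun y => ‖y‖ ^ 2) ((2 : ℝ) • x) x := by
  rw [hasGradientAt_iff_hasFDerivAt, ofNat_smul_eq_nsmul, map_nsmul]
  exact (hasStrictFDerivAt_norm_sq x).hasFDerivAt

end GradientCalculus

section CoxPartialLikelihood

variable {F ι : Type*} [NormedAddCommGroup F] [InnerProductSpace ℝ F] [CompleteSpace F]
  (x : ι → F)

noncomputable def softmaxMean (R : Finset ι) (u : F) : F :=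
  (∑ j ∈ R, exp ⟪x j, u⟫)⁻¹ • ∑ j ∈ R, exp ⟪x j, u⟫ • x j

theorem hasGradientAt_log_sum_exp_inner (R : Finset ι) (u : F) :
    HasGradientAt (fun w => log (∑ j ∈ R, exp ⟪x j, w⟫)) (softmaxMean x R u) u := by
  rcases R.eq_empty_or_nonempty with rfl | hR
  -- an empty risk set gives the constant `log 0 = 0`, and `softmaxMean` is then `0⁻¹ • 0 = 0`
  · simpa [softmaxMean] using hasGradientAt_const u (0 : ℝ)
  have hZ : 0 < ∑ j ∈ R, exp ⟪x j, u⟫ := Finset.sum_pos (fun j _ => exp_pos _) hR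
  have hsum : HasGradientAt (fun w => ∑ j ∈ R, exp ⟪x j, w⟫)
      (∑ j ∈ R, exp ⟪x j, u⟫ • x j) u :=
    HasGradientAt.fun_sum fun j _ =>
      (hasDerivAt_exp _).comp_hasGradientAt u (hasGradientAt_inner_right (x j) u)
  exact (hasDerivAt_log hZ.ne').comp_hasGradientAt u hsum

noncomputable def coxPartialLogLik (S : Finset ι) (R : ι → Finset ι) (w : F) : ℝ :=
  ∑ i ∈ S, (⟪x i, w⟫ - log (∑ j ∈ R i, exp ⟪x j, w⟫))

theorem hasGradientAt_coxPartialLogLik (S : Finset ι) (R : ι → Finset ι) (u : F) :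
    HasGradientAt (coxPartialLogLik x S R) (∑ i ∈ S, (x i - softmaxMean x (R i) u)) u :=
  HasGradientAt.fun_sum fun i _ =>
    (hasGradientAt_inner_right (x i) u).sub (hasGradientAt_log_sum_exp_inner x (R i) u)

end CoxPartialLikelihood

theorem Matrix.isStarProjection_diagonal {ι R : Type*} [Fintype ι] [DecidableEq ι] [Semiring R]
    [StarRing R] {v : ι → R} (hv : ∀ i, IsStarProjection (v i)) :
    IsStarProjection (Matrix.diagonal v) where
  isIdempotentElem := by
    rw [IsIdempotentElem, Matrix.diagonal_mul_diagonal]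
    exact congrArg _ (funext fun i => (hv i).isIdempotentElem.eq)
  isSelfAdjoint := by
    rw [IsSelfAdjoint, Matrix.star_eq_conjTranspose, Matrix.diagonal_conjTranspose]
    exact congrArg _ (funext fun i => (hv i).isSelfAdjoint.star_eq)

theorem IsStarProjection.inner_apply_sub_self_apply_eq_zero {F : Type*} [NormedAddCommGroup F]
    [InnerProductSpace ℝ F] [CompleteSpace F] {T : F →L[ℝ] F} (hT : IsStarProjection T)
    (w v : F) : ⟪T w - w, T v⟫ = 0 := by
  rw [← ContinuousLinearMap.adjoint_inner_left, hT.isSelfAdjoint.adjoint_eq, map_sub,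
    ← mul_apply_eq_comp, hT.isIdempotentElem.eq, sub_self, inner_zero_left]

theorem excel_inner_identity_general
    (N d : ℕ)
    (x : Fin N → EuclideanSpace ℝ (Fin d))
    (S : Finset (Fin N))
    (N₁ : ℕ)
    (R : Fin N → Finset (Fin N))
    (K : Finset (Fin d))
    (P : EuclideanSpace ℝ (Fin d) → EuclideanSpace ℝ (Fin d))
    (hP : ∀ w (a : Fin d), P w a = if a ∈ K then w a else 0)
    (lam2 lam3 : ℝ)
    (L : EuclideanSpace ℝ (Fin d) → ℝ)
    (hL : ∀ w, L w =
      -(1 / (N₁ : ℝ)) * ∑ i ∈ S, (⟪x i, w⟫ - Real.log (∑ j ∈ R i, Real.exp ⟪x j, w⟫))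
      - lam2 / (N₁ : ℝ) * ∑ i ∈ S, (⟪x i, P w⟫ - Real.log (∑ j ∈ R i, Real.exp ⟪x j, P w⟫))
      + lam3 / 2 * ‖w‖ ^ 2)
    (m : EuclideanSpace ℝ (Fin d) → Fin N → EuclideanSpace ℝ (Fin d))
    (hm : ∀ u i, m u i =
      (∑ j ∈ R i, Real.exp ⟪x j, u⟫)⁻¹ • ∑ j ∈ R i, Real.exp ⟪x j, u⟫ • x j)
    (wh : EuclideanSpace ℝ (Fin d)) :
    ⟪P wh - wh, gradient L (P wh)⟫ = 1 / (N₁ : ℝ) *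
      ⟪wh, (∑ i ∈ S, (x i - m (P wh) i)) - P (∑ i ∈ S, (x i - m (P wh) i))⟫ := by
  set Pk := Matrix.toEuclideanCLM (𝕜 := ℝ)
    (Matrix.diagonal fun a : Fin d => if a ∈ K then (1 : ℝ) else 0)
  have hPk : IsStarProjection Pk :=
    (Matrix.isStarProjection_diagonal fun a => by
      split_ifs
      exacts [.one _, .zero _]).map Matrix.toEuclideanCLM
  obtain rfl : P = Pk := funext fun w => by ext a; simp [hP, Pk, Matrix.mulVec_diagonal]
  obtain rfl : m = fun u i => softmaxMean x (R i) u := funext fun u => funext (hm u)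
  obtain rfl : L = fun w => -(1 / (N₁ : ℝ)) * coxPartialLogLik x S R w
      - lam2 / N₁ * coxPartialLogLik x S R (Pk w) + lam3 / 2 * ‖w‖ ^ 2 := funext hL
  have hPkwh : Pk (Pk wh) = Pk wh := by rw [← mul_apply_eq_comp, hPk.isIdempotentElem.eq]
  have hcomp : HasGradientAt (fun w => coxPartialLogLik x S R (Pk w))
      (Pk (∑ i ∈ S, (x i - softmaxMean x (R i) (Pk wh)))) (Pk wh) := by
    have := (hasGradientAt_coxPartialLogLik x S R (Pk (Pk wh))).comp_continuousLinearMap Pk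
    rwa [hPkwh, hPk.isSelfAdjoint.adjoint_eq] at this
  have hgrad :=
    (((hasGradientAt_coxPartialLogLik x S R (Pk wh)).const_mul (-(1 / (N₁ : ℝ)))).sub
      (hcomp.const_mul (lam2 / N₁))).add ((hasGradientAt_norm_sq (Pk wh)).const_mul (lam3 / 2))
  have hsymm (a) : ⟪Pk wh - wh, a⟫ = ⟪wh, Pk a - a⟫ := by
    rw [inner_sub_left, inner_sub_right, ← ContinuousLinearMap.adjoint_inner_right,
      hPk.isSelfAdjoint.adjoint_eq]
  simp only [hgrad.gradient, inner_add_right, inner_sub_right, real_inner_smul_right,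
    hPk.inner_apply_sub_self_apply_eq_zero]
  rw [hsymm, inner_sub_right]
  ring

/-- Intermediate identity in the proof of Theorem 2. -/
theorem excel_inner_identity
    (N d k : ℕ) (hN : 0 < N) (hd : 0 < d) (hk : 0 < k) (hkd : k ≤ d)
    (x : Fin N → EuclideanSpace ℝ (Fin d))
    (E : Fin N → ℕ) (hE : ∀ i, E i = 0 ∨ E i = 1)
    (T : Fin N → ℝ)
    (S : Finset (Fin N)) (hS : S = Finset.univ.filter fun i => E i = 1)
    (hSne : S.Nonempty)
    (N₁ : ℕ) (hN₁ : N₁ = S.card)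
    (R : Fin N → Finset (Fin N))
    (hR : ∀ i, R i = Finset.univ.filter fun j => T i ≤ T j)
    (K : Finset (Fin d)) (hK : K.card = k)
    (P : EuclideanSpace ℝ (Fin d) → EuclideanSpace ℝ (Fin d))
    (hP : ∀ w (a : Fin d), P w a = if a ∈ K then w a else 0)
    (lam2 lam3 : ℝ) (hlam2 : 0 < lam2) (hlam3 : 0 < lam3)
    (L : EuclideanSpace ℝ (Fin d) → ℝ)
    (hL : ∀ w, L w =
      -(1 / (N₁ : ℝ)) * ∑ i ∈ S, (⟪x i, w⟫ - Real.log (∑ j ∈ R i, Real.exp ⟪x j, w⟫))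
      - lam2 / (N₁ : ℝ) * ∑ i ∈ S, (⟪x i, P w⟫ - Real.log (∑ j ∈ R i, Real.exp ⟪x j, P w⟫))
      + lam3 / 2 * ‖w‖ ^ 2)
    (m : EuclideanSpace ℝ (Fin d) → Fin N → EuclideanSpace ℝ (Fin d))
    (hm : ∀ u i, m u i =
      (∑ j ∈ R i, Real.exp ⟪x j, u⟫)⁻¹ • ∑ j ∈ R i, Real.exp ⟪x j, u⟫ • x j)
    (wh : EuclideanSpace ℝ (Fin d)) (hwh : ∀ w, L wh ≤ L w) :
    ⟪P wh - wh, gradient L (P wh)⟫ = 1 / (N₁ : ℝ) *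
      ⟪wh, (∑ i ∈ S, (x i - m (P wh) i)) - P (∑ i ∈ S, (x i - m (P wh) i))⟫ :=
  excel_inner_identity_general N d x S N₁ R K P hP lam2 lam3 L hL m hm wh
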